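/- Suppose G is the adjacency matrix of a finite simple graph on n vertices with at least one edge, and let K be a clique of maximum size ω ≥ 2. Then the allocation σ* with σ*_i = 1/ω for i ∈ K and σ*_i = 0 otherwise satisfies (G·σ*)_i = (ω−1)/ω for every i ∈ K, and σ* maximizes P(Y*(σ)) among all σ ∈ ℝ^n with σ_i ≥ 0 and Σ_i σ_i ≤ 1. In particular, any maximum clique is the active set at an optimal allocation for the success probability objective. -/

import Mathlib

/-!
Write `A = ∑ aᵢ`, `Q = aᵀ G a` and `λ = P'(Y)`, so that `Y = A + β Q / 2` and
`aᵢ = λ σᵢ (1 + β (G a)ᵢ)`. Cauchy–Schwarz with weights `λ σᵢ` gives `A² ≤ λ (A + β Q)` whenever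
`∑ σᵢ ≤ 1`, and the Motzkin–Straus inequality gives `Q ≤ (1 - 1/ω) A²` (moving mass along a
non-edge towards the endpoint with the larger `(G a)ᵢ` never decreases `Q`, so one may assume the
support of `a` is a clique). For the uniform allocation on a maximum clique both are equalities,
so its total effort `T` solves `T = λ₀ (1 + β (1 - 1/ω) T)`. If some allocation had `Y > Y₀`,
concavity of `P` would give `λ ≤ λ₀`, and the two inequalities would then force `A ≤ T`, hence
`Y ≤ Y₀`.
-/

open Matrix

/-- The equilibrium conditions: `a` is nonnegative, solves
`(I − P'(Y)·β·diag(σ)·G)·a = P'(Y)·σ`, and `Y = Y(a)`. -/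
def eqmCond {n : ℕ} (G : Matrix (Fin n) (Fin n) ℝ) (β : ℝ) (P : ℝ → ℝ)
    (σ a : Fin n → ℝ) (Y : ℝ) : Prop :=
  (∀ i, 0 ≤ a i) ∧
  ((1 : Matrix (Fin n) (Fin n) ℝ)
      - (deriv P Y * β) • (Matrix.diagonal σ * G)).mulVec a = deriv P Y • σ ∧
  Y = ∑ i, a i + β / 2 * ∑ i, ∑ j, G i j * a i * a j

open Finset

def Matrix.IsClique {ι R : Type*} [One R] (G : Matrix ι ι R) (K : Finset ι) : Prop :=
  ∀ i ∈ K, ∀ j ∈ K, i ≠ j → G i j = 1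

section MotzkinStraus

variable {ι : Type*} [Fintype ι] [DecidableEq ι] {G : Matrix ι ι ℝ}

theorem Matrix.IsSymm.dotProduct_mulVec_add_single_sub_single (hG : G.IsSymm)
    (x : ι → ℝ) (i j : ι) (t : ℝ) :
    (x + Pi.single i t - Pi.single j t) ⬝ᵥ G *ᵥ (x + Pi.single i t - Pi.single j t) =
      x ⬝ᵥ G *ᵥ x + 2 * t * ((G *ᵥ x) i - (G *ᵥ x) j) +
        t ^ 2 * (G i i + G j j - 2 * G i j) := by
  have hx : ∀ k, x ⬝ᵥ G *ᵥ Pi.single k t = t * (G *ᵥ x) k := fun k => by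
    rw [dotProduct_mulVec, dotProduct_single, ← vecMul_transpose, hG.eq, mul_comm]
  have hji : G j i = G i j := hG.apply i j
  simp only [mulVec_add, mulVec_sub, add_dotProduct, sub_dotProduct, dotProduct_add,
    dotProduct_sub, hx, single_dotProduct]
  simp [hji]
  ring

theorem dotProduct_mulVec_le_sq_sum_sub_sum_sq (hdiag : ∀ i, G i i = 0)
    (hle : ∀ i j, G i j ≤ 1) {x : ι → ℝ} (hx : ∀ i, 0 ≤ x i) :
    x ⬝ᵥ G *ᵥ x ≤ (∑ i, x i) ^ 2 - ∑ i, x i ^ 2 := by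
  have hrow : ∀ i j, G i j * x j ≤ x j - if i = j then x j else 0 := fun i j => by
    split_ifs with h
    · simp [h, hdiag]
    · simpa using mul_le_mul_of_nonneg_right (hle i j) (hx j)
  calc x ⬝ᵥ G *ᵥ x ≤ ∑ i, x i * ∑ j, (x j - if i = j then x j else 0) :=
        sum_le_sum fun i _ => mul_le_mul_of_nonneg_left (sum_le_sum fun j _ => hrow i j) (hx i)
    _ = (∑ i, x i) ^ 2 - ∑ i, x i ^ 2 := by
        simp only [sum_sub_distrib, sum_ite_eq, mem_univ, if_true, mul_sub, sq, sum_mul]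

theorem dotProduct_mulVec_le_of_card_support_le (hdiag : ∀ i, G i i = 0)
    (hle : ∀ i j, G i j ≤ 1) {x : ι → ℝ} (hx : ∀ i, 0 ≤ x i) {ω : ℕ}
    (hω : #{i | x i ≠ 0} ≤ ω) :
    x ⬝ᵥ G *ᵥ x ≤ (1 - 1 / ω) * (∑ i, x i) ^ 2 := by
  set S : Finset ι := {i | x i ≠ 0}
  have hsum : ∑ i, x i = ∑ i ∈ S, x i := (sum_filter_ne_zero _).symm
  have hsq : ∑ i ∈ S, x i ^ 2 = ∑ i, x i ^ 2 :=
    sum_subset (subset_univ S) fun i _ hi => by simpa [S] using hi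
  have hCS : (∑ i, x i) ^ 2 ≤ (∑ i, x i ^ 2) * ω := by
    rw [hsum, ← hsq, mul_comm]
    calc (∑ i ∈ S, x i) ^ 2 ≤ #S * ∑ i ∈ S, x i ^ 2 := sq_sum_le_card_mul_sum_sq
      _ ≤ ω * ∑ i ∈ S, x i ^ 2 := by gcongr
  have hdiv : (∑ i, x i) ^ 2 / ω ≤ ∑ i, x i ^ 2 :=
    div_le_of_le_mul₀ (Nat.cast_nonneg ω) (sum_nonneg fun i _ => sq_nonneg _) hCS
  calc x ⬝ᵥ G *ᵥ x ≤ (∑ i, x i) ^ 2 - ∑ i, x i ^ 2 :=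
        dotProduct_mulVec_le_sq_sum_sub_sum_sq hdiag hle hx
    _ ≤ (1 - 1 / ω) * (∑ i, x i) ^ 2 := by rw [one_sub_mul, one_div_mul_eq_div]; linarith

theorem exists_card_support_lt_of_apply_eq_zero (hG : G.IsSymm) (hdiag : ∀ i, G i i = 0)
    {x : ι → ℝ} (hx : ∀ k, 0 ≤ x k) {i j : ι} (hi : x i ≠ 0) (hj : x j ≠ 0) (hij : i ≠ j)
    (hGij : G i j = 0) :
    ∃ y : ι → ℝ, (∀ k, 0 ≤ y k) ∧ ∑ k, y k = ∑ k, x k ∧ x ⬝ᵥ G *ᵥ x ≤ y ⬝ᵥ G *ᵥ y ∧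
      #{k | y k ≠ 0} < #{k | x k ≠ 0} := by
  wlog hle : (G *ᵥ x) j ≤ (G *ᵥ x) i generalizing i j
  · exact this hj hi hij.symm (by rwa [hG.apply]) (le_of_not_ge hle)
  set y := x + Pi.single i (x j) - Pi.single j (x j) with hy
  have hyk : ∀ k, y k = x k + (if k = i then x j else 0) - (if k = j then x j else 0) :=
    fun k => by simp [hy, Pi.single_apply]
  have hyj : y j = 0 := by simp [hyk, hij.symm]
  refine ⟨y, fun k => ?_, ?_, ?_, ?_⟩
  · rw [hyk]
    by_cases hkj : k = j
    · simp [hkj, hij.symm]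
    · have := hx k
      have := hx j
      split_ifs <;> linarith
  · simp [hy, sum_add_distrib, sum_sub_distrib]
  · rw [hy, hG.dotProduct_mulVec_add_single_sub_single, hdiag, hdiag, hGij]
    nlinarith [hx j]
  · refine card_lt_card ((ssubset_iff_of_subset fun k hk => ?_).2
      ⟨j, by simpa using hj, by simp [hyj]⟩)
    simp only [mem_filter, mem_univ, true_and] at hk ⊢
    intro hxk
    by_cases hki : k = i
    · exact hi (hki ▸ hxk)
    by_cases hkj : k = j
    · exact hk (hkj ▸ hyj)
    · exact hk (by simp [hyk, hxk, hki, hkj])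

theorem exists_isClique_support (hG : G.IsSymm) (hdiag : ∀ i, G i i = 0)
    (h01 : ∀ i j, G i j = 0 ∨ G i j = 1) {x : ι → ℝ} (hx : ∀ k, 0 ≤ x k) :
    ∃ y : ι → ℝ, (∀ k, 0 ≤ y k) ∧ ∑ k, y k = ∑ k, x k ∧ x ⬝ᵥ G *ᵥ x ≤ y ⬝ᵥ G *ᵥ y ∧
      G.IsClique {k | y k ≠ 0} := by
  induction hm : #{k | x k ≠ 0} using Nat.strong_induction_on generalizing x with
  | _ m ih =>
  by_cases hclique : G.IsClique {k | x k ≠ 0}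
  · exact ⟨x, hx, rfl, le_rfl, hclique⟩
  simp only [Matrix.IsClique, not_forall] at hclique
  obtain ⟨i, hi, j, hj, hij, hGij⟩ := hclique
  simp only [mem_filter, mem_univ, true_and] at hi hj
  obtain ⟨y, hy, hsum, hQ, hcard⟩ :=
    exists_card_support_lt_of_apply_eq_zero hG hdiag hx hi hj hij ((h01 i j).resolve_right hGij)
  obtain ⟨z, hz, hsum', hQ', hzclique⟩ := ih _ (hm ▸ hcard) hy rfl
  exact ⟨z, hz, hsum'.trans hsum, hQ.trans hQ', hzclique⟩

theorem dotProduct_mulVec_le_of_isClique_card_le (hG : G.IsSymm) (hdiag : ∀ i, G i i = 0)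
    (h01 : ∀ i j, G i j = 0 ∨ G i j = 1) {ω : ℕ} (hω : ∀ K, G.IsClique K → #K ≤ ω)
    {x : ι → ℝ} (hx : ∀ k, 0 ≤ x k) :
    x ⬝ᵥ G *ᵥ x ≤ (1 - 1 / ω) * (∑ i, x i) ^ 2 := by
  obtain ⟨y, hy, hsum, hQ, hclique⟩ := exists_isClique_support hG hdiag h01 hx
  have hle : ∀ i j, G i j ≤ 1 := fun i j => by rcases h01 i j with h | h <;> simp [h]
  calc x ⬝ᵥ G *ᵥ x ≤ y ⬝ᵥ G *ᵥ y := hQ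
    _ ≤ (1 - 1 / ω) * (∑ i, y i) ^ 2 :=
      dotProduct_mulVec_le_of_card_support_le hdiag hle hy (hω _ hclique)
    _ = (1 - 1 / ω) * (∑ i, x i) ^ 2 := by rw [hsum]

theorem mulVec_apply_eq_sum_sub_of_isClique (hdiag : ∀ i, G i i = 0) {K : Finset ι}
    (hK : G.IsClique K) {x : ι → ℝ} (hx : ∀ j ∉ K, x j = 0) {i : ι} (hi : i ∈ K) :
    (G *ᵥ x) i = ∑ j, x j - x i := by
  have hrow : ∀ j, G i j * x j = x j - if i = j then x j else 0 := fun j => by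
    by_cases hij : i = j
    · simp [hij, hdiag]
    by_cases hj : j ∈ K
    · simp [hK i hi j hj hij, hij]
    · simp [hx j hj]
  simp only [mulVec, dotProduct, hrow, sum_sub_distrib, sum_ite_eq, mem_univ, if_true]

end MotzkinStraus

theorem ConcaveOn.deriv_pos_of_strictMonoOn {P : ℝ → ℝ} {b y : ℝ}
    (hconc : ConcaveOn ℝ (Set.Ici b) P) (hmono : StrictMonoOn P (Set.Ici b)) (hy : b ≤ y)
    (hd : DifferentiableAt ℝ P y) : 0 < deriv P y := by
  have hy' : y ∈ Set.Ici b := hy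
  have hy1 : y + 1 ∈ Set.Ici b := Set.mem_Ici.2 (by linarith)
  calc 0 < slope P y (y + 1) := by
        rw [slope_def_field, add_sub_cancel_left, div_one, sub_pos]
        exact hmono hy' hy1 (lt_add_one y)
    _ ≤ deriv P y := hconc.slope_le_deriv hy' hy1 (lt_add_one y) hd

theorem le_of_sq_le_of_eq_mul {A Q T l l₀ β c : ℝ} (hA : 0 ≤ A) (hT : 0 ≤ T) (hβ : 0 ≤ β)
    (hc : 0 ≤ c) (hl : 0 ≤ l) (hl₀ : 0 < l₀) (hll₀ : l ≤ l₀)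
    (hCS : A ^ 2 ≤ l * (A + β * Q)) (hMS : Q ≤ c * A ^ 2) (hTeq : T = l₀ * (1 + β * c * T)) :
    A ≤ T := by
  have hTd : T * (1 - l₀ * β * c) = l₀ := by linear_combination hTeq
  have hd : 0 < 1 - l₀ * β * c := pos_of_mul_pos_right (by rwa [hTd]) hT
  rcases hA.eq_or_lt with rfl | hA
  · exact hT
  have h : A * (A * (1 - l₀ * β * c)) ≤ A * (T * (1 - l₀ * β * c)) := by
    rw [hTd]
    nlinarith [mul_le_mul_of_nonneg_left hMS (mul_nonneg hl hβ),
      mul_le_mul_of_nonneg_right hll₀ (by positivity : 0 ≤ A + β * (c * A ^ 2))]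
  exact le_of_mul_le_mul_right (le_of_mul_le_mul_left h hA) hd

namespace eqmCond

variable {n : ℕ} {G : Matrix (Fin n) (Fin n) ℝ} {β : ℝ} {P : ℝ → ℝ} {σ a : Fin n → ℝ} {Y : ℝ}

theorem apply_eq (h : eqmCond G β P σ a Y) (i : Fin n) :
    a i = deriv P Y * σ i * (1 + β * (G *ᵥ a) i) := by
  have hi := congrFun h.2.1 i
  simp only [sub_mulVec, one_mulVec, smul_mulVec, ← mulVec_mulVec, mulVec_diagonal,
    Pi.smul_apply, smul_eq_mul, Pi.sub_apply] at hi
  linear_combination hi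

theorem eq_sum_add_dotProduct (h : eqmCond G β P σ a Y) :
    Y = ∑ i, a i + β / 2 * (a ⬝ᵥ G *ᵥ a) := by
  rw [h.2.2]
  congr 2
  simp only [dotProduct, mulVec, mul_sum]
  exact sum_congr rfl fun i _ => sum_congr rfl fun j _ => by ring

theorem mulVec_nonneg (h : eqmCond G β P σ a Y) (hG : ∀ i j, 0 ≤ G i j) (i : Fin n) :
    0 ≤ (G *ᵥ a) i :=
  dotProduct_nonneg_of_nonneg (hG i) h.1

theorem nonneg (h : eqmCond G β P σ a Y) (hG : ∀ i j, 0 ≤ G i j) (hβ : 0 ≤ β) : 0 ≤ Y := by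
  rw [h.eq_sum_add_dotProduct]
  have := sum_nonneg fun i (_ : i ∈ univ) => mul_nonneg (h.1 i) (h.mulVec_nonneg hG i)
  have := sum_nonneg fun i (_ : i ∈ univ) => h.1 i
  unfold dotProduct
  positivity

theorem sq_sum_le (h : eqmCond G β P σ a Y) (hG : ∀ i j, 0 ≤ G i j) (hβ : 0 ≤ β)
    (hσ : ∀ i, 0 ≤ σ i) (hP : 0 ≤ deriv P Y) :
    (∑ i, a i) ^ 2 ≤ deriv P Y * (∑ i, σ i) * (∑ i, a i + β * (a ⬝ᵥ G *ᵥ a)) := by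
  have key := sum_sq_le_sum_mul_sum_of_sq_le_mul univ (r := a)
    (f := fun i => deriv P Y * σ i) (g := fun i => a i * (1 + β * (G *ᵥ a) i))
    (fun i _ => mul_nonneg hP (hσ i))
    (fun i _ => mul_nonneg (h.1 i) (by have := h.mulVec_nonneg hG i; positivity))
    (fun i _ => le_of_eq (by rw [sq]; nth_rw 1 [h.apply_eq i]; ring))
  simpa [mul_sum, sum_add_distrib, mul_add, dotProduct, mul_left_comm] using key

section Clique

variable {K : Finset (Fin n)}

theorem apply_eq_sum_div_card_of_isClique (h : eqmCond G β P σ a Y) (hdiag : ∀ i, G i i = 0)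
    (hK : G.IsClique K) (hσ : ∀ i, σ i = if i ∈ K then (#K : ℝ)⁻¹ else 0) (hβ : 0 ≤ β)
    (hP : 0 ≤ deriv P Y) :
    ∀ i, a i = if i ∈ K then (∑ j, a j) / #K else 0 := by
  have hzero : ∀ i ∉ K, a i = 0 := fun i hi => by simp [h.apply_eq i, hσ i, hi]
  have hden : 0 < 1 + deriv P Y * β * (#K : ℝ)⁻¹ := by positivity
  set r := deriv P Y * (#K : ℝ)⁻¹ * (1 + β * ∑ j, a j) / (1 + deriv P Y * β * (#K : ℝ)⁻¹)
  have hconst : ∀ i ∈ K, a i = r := fun i hi => by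
    have hai := h.apply_eq i
    rw [hσ i, if_pos hi, mulVec_apply_eq_sum_sub_of_isClique hdiag hK hzero hi] at hai
    rw [eq_div_iff hden.ne']
    linear_combination hai
  have hsum : ∑ j, a j = #K * r := by
    rw [← sum_subset (subset_univ K) fun j _ hj => hzero j hj, sum_congr rfl hconst,
      sum_const, nsmul_eq_mul]
  intro i
  split_ifs with hi
  · have hw : (#K : ℝ) ≠ 0 := Nat.cast_ne_zero.2 (card_ne_zero_of_mem hi)
    rw [hconst i hi, hsum, mul_div_cancel_left₀ r hw]
  · exact hzero i hi

theorem mulVec_apply_eq_of_isClique (h : eqmCond G β P σ a Y) (hdiag : ∀ i, G i i = 0)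
    (hK : G.IsClique K) (hσ : ∀ i, σ i = if i ∈ K then (#K : ℝ)⁻¹ else 0) (hβ : 0 ≤ β)
    (hP : 0 ≤ deriv P Y) {i : Fin n} (hi : i ∈ K) :
    (G *ᵥ a) i = ∑ j, a j - (∑ j, a j) / #K := by
  have ha := h.apply_eq_sum_div_card_of_isClique hdiag hK hσ hβ hP
  rw [mulVec_apply_eq_sum_sub_of_isClique hdiag hK (fun j hj => by simp [ha j, hj]) hi, ha i,
    if_pos hi]

theorem sum_eq_of_isClique (h : eqmCond G β P σ a Y) (hdiag : ∀ i, G i i = 0)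
    (hK : G.IsClique K) (hK₀ : K.Nonempty) (hσ : ∀ i, σ i = if i ∈ K then (#K : ℝ)⁻¹ else 0)
    (hβ : 0 ≤ β) (hP : 0 ≤ deriv P Y) :
    ∑ i, a i = deriv P Y * (1 + β * (1 - 1 / #K) * ∑ i, a i) := by
  obtain ⟨i, hi⟩ := hK₀
  have hw : (#K : ℝ) ≠ 0 := Nat.cast_ne_zero.2 (card_ne_zero_of_mem hi)
  have hai := h.apply_eq i
  rw [hσ, if_pos hi, h.mulVec_apply_eq_of_isClique hdiag hK hσ hβ hP hi,
    h.apply_eq_sum_div_card_of_isClique hdiag hK hσ hβ hP i, if_pos hi] at hai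
  field_simp at hai ⊢
  linear_combination hai

theorem eq_sum_add_sq_of_isClique (h : eqmCond G β P σ a Y) (hdiag : ∀ i, G i i = 0)
    (hK : G.IsClique K) (hK₀ : K.Nonempty) (hσ : ∀ i, σ i = if i ∈ K then (#K : ℝ)⁻¹ else 0)
    (hβ : 0 ≤ β) (hP : 0 ≤ deriv P Y) :
    Y = ∑ i, a i + β / 2 * ((1 - 1 / #K) * (∑ i, a i) ^ 2) := by
  have ha := h.apply_eq_sum_div_card_of_isClique hdiag hK hσ hβ hP
  have hQ : ∀ i, a i * (G *ᵥ a) i =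
      if i ∈ K then (∑ j, a j) / #K * (∑ j, a j - (∑ j, a j) / #K) else 0 := fun i => by
    split_ifs with hi
    · rw [h.mulVec_apply_eq_of_isClique hdiag hK hσ hβ hP hi, ha i, if_pos hi]
    · rw [ha i, if_neg hi, zero_mul]
  have hw : (#K : ℝ) ≠ 0 := Nat.cast_ne_zero.2 hK₀.card_pos.ne'
  rw [h.eq_sum_add_dotProduct, dotProduct, sum_congr rfl fun i _ => hQ i, sum_ite_mem,
    univ_inter, sum_const, nsmul_eq_mul]
  generalize ∑ j, a j = T
  generalize (#K : ℝ) = w at hw ⊢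
  field_simp

theorem le_of_isClique {σ₀ a₀ : Fin n → ℝ} {Y₀ : ℝ} (h : eqmCond G β P σ a Y)
    (h₀ : eqmCond G β P σ₀ a₀ Y₀) (hG : G.IsSymm) (hdiag : ∀ i, G i i = 0)
    (h01 : ∀ i j, G i j = 0 ∨ G i j = 1) (hβ : 0 ≤ β) (hK : G.IsClique K)
    (hKmax : ∀ K', G.IsClique K' → #K' ≤ #K) (hK₀ : K.Nonempty)
    (hσ₀ : ∀ i, σ₀ i = if i ∈ K then (#K : ℝ)⁻¹ else 0) (hσ : ∀ i, 0 ≤ σ i)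
    (hσ1 : ∑ i, σ i ≤ 1) (hP : 0 ≤ deriv P Y) (hP₀ : 0 < deriv P Y₀)
    (hPP₀ : deriv P Y ≤ deriv P Y₀) :
    Y ≤ Y₀ := by
  have hGnn : ∀ i j, 0 ≤ G i j := fun i j => by rcases h01 i j with h | h <;> simp [h]
  have hc : (0 : ℝ) ≤ 1 - 1 / #K :=
    sub_nonneg.2 (div_le_one_of_le₀ (Nat.one_le_cast.2 hK₀.card_pos) (Nat.cast_nonneg _))
  have hT := h₀.sum_eq_of_isClique hdiag hK hK₀ hσ₀ hβ hP₀.le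
  have hMS := dotProduct_mulVec_le_of_isClique_card_le hG hdiag h01 hKmax h.1
  have hQ : 0 ≤ a ⬝ᵥ G *ᵥ a := dotProduct_nonneg_of_nonneg h.1 (h.mulVec_nonneg hGnn)
  have hA : 0 ≤ ∑ i, a i := sum_nonneg fun i _ => h.1 i
  have hCS : (∑ i, a i) ^ 2 ≤ deriv P Y * (∑ i, a i + β * (a ⬝ᵥ G *ᵥ a)) :=
    (h.sq_sum_le hGnn hβ hσ hP).trans
      (mul_le_mul_of_nonneg_right (mul_le_of_le_one_right hP hσ1) (by positivity))
  have hAT :=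
    le_of_sq_le_of_eq_mul hA (sum_nonneg fun i _ => h₀.1 i) hβ hc hP hP₀ hPP₀ hCS hMS hT
  rw [h.eq_sum_add_dotProduct, h₀.eq_sum_add_sq_of_isClique hdiag hK hK₀ hσ₀ hβ hP₀.le]
  gcongr
  calc a ⬝ᵥ G *ᵥ a ≤ (1 - 1 / #K) * (∑ i, a i) ^ 2 := hMS
    _ ≤ (1 - 1 / #K) * (∑ i, a₀ i) ^ 2 := by gcongr

end Clique

end eqmCond

theorem statement_11 {n : ℕ} (G : Matrix (Fin n) (Fin n) ℝ)
    (hG_symm : G.IsSymm)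
    (hG_01 : ∀ i j, G i j = 0 ∨ G i j = 1)
    (hG_diag : ∀ i, G i i = 0)
    (β : ℝ) (hβ : 0 < β)
    (P : ℝ → ℝ)
    (hP_mono : StrictMonoOn P (Set.Ici (0:ℝ)))
    (hP_conc : ConcaveOn ℝ (Set.Ici (0:ℝ)) P)
    (hP_diff : ∀ y : ℝ, 0 ≤ y → DifferentiableAt ℝ P y)
    (astar : (Fin n → ℝ) → Fin n → ℝ) (Ystar : (Fin n → ℝ) → ℝ)
    (heqm : ∀ σ : Fin n → ℝ, (∀ i, 0 ≤ σ i) → eqmCond G β P σ (astar σ) (Ystar σ))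
    (K : Finset (Fin n))
    (hK_clique : ∀ i ∈ K, ∀ j ∈ K, i ≠ j → G i j = 1)
    (hK_max : ∀ K' : Finset (Fin n),
      (∀ i ∈ K', ∀ j ∈ K', i ≠ j → G i j = 1) → K'.card ≤ K.card)
    (hK_card : 2 ≤ K.card)
    (σstar : Fin n → ℝ)
    (hσstar : ∀ i, σstar i = if i ∈ K then ((K.card : ℝ))⁻¹ else 0) :
    (∀ i ∈ K, G.mulVec σstar i = ((K.card : ℝ) - 1) / (K.card : ℝ)) ∧
    (∀ σ : Fin n → ℝ, (∀ i, 0 ≤ σ i) → ∑ i, σ i ≤ 1 →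
      P (Ystar σ) ≤ P (Ystar σstar)) := by
  have hK₀ : K.Nonempty := card_pos.1 (by omega)
  have hGnn : ∀ i j, 0 ≤ G i j := fun i j => by rcases hG_01 i j with h | h <;> simp [h]
  have hσstar_nonneg : ∀ i, 0 ≤ σstar i := fun i => by rw [hσstar]; split_ifs <;> positivity
  have hY_nonneg : ∀ σ, (∀ i, 0 ≤ σ i) → 0 ≤ Ystar σ := fun σ hσ =>
    (heqm σ hσ).nonneg hGnn hβ.le
  have hderiv_pos : ∀ σ, (∀ i, 0 ≤ σ i) → 0 < deriv P (Ystar σ) := fun σ hσ =>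
    hP_conc.deriv_pos_of_strictMonoOn hP_mono (hY_nonneg σ hσ) (hP_diff _ (hY_nonneg σ hσ))
  refine ⟨fun i hi => ?_, fun σ hσ hσ1 => ?_⟩
  · have hw : (#K : ℝ) ≠ 0 := Nat.cast_ne_zero.2 (by omega)
    have hsum : ∑ j, σstar j = 1 := by simp [hσstar, hw]
    rw [mulVec_apply_eq_sum_sub_of_isClique hG_diag hK_clique (fun j hj => by simp [hσstar, hj])
      hi, hsum, hσstar, if_pos hi]
    field_simp
  rcases le_or_gt (Ystar σ) (Ystar σstar) with hle | hlt
  · exact hP_mono.monotoneOn (hY_nonneg σ hσ) (hY_nonneg σstar hσstar_nonneg) hle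
  have hPP₀ := hP_conc.antitoneOn_deriv (fun y hy => hP_diff y hy)
    (hY_nonneg σstar hσstar_nonneg) (hY_nonneg σ hσ) hlt.le
  exact absurd ((heqm σ hσ).le_of_isClique (heqm σstar hσstar_nonneg) hG_symm hG_diag hG_01
    hβ.le hK_clique hK_max hK₀ hσstar hσ hσ1 (hderiv_pos σ hσ).le
    (hderiv_pos σstar hσstar_nonneg) hPP₀) (not_le.2 hlt)
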